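/- arXiv:1102.1419 — 6 statements merged into one kernel-verified Lean document; each statement's English description precedes it below -/
import Mathlib

section
/- Let (X,p) be a TVS-cone metric space over E with cone P, and fix e ∈ int P. Then d_p = ξ_e ∘ p is a metric on X: for all x, y, z ∈ X one has d_p(x,y) ≥ 0; d_p(x,y) = 0 if and only if x = y; d_p(x,y) = d_p(y,x); and d_p(x,y) ≤ d_p(x,z) + d_p(z,y). -/
open Filter Topology

section Defs

variable {E : Type*} [AddCommGroup E] [Module ℝ E] [TopologicalSpace E]

/-- `P` is a closed, pointed convex cone with nonempty interior in the TVS `E`. -/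
structure IsTVSCone (P : Set E) : Prop where
  add_mem : ∀ ⦃a⦄, a ∈ P → ∀ ⦃b⦄, b ∈ P → a + b ∈ P
  smul_mem : ∀ (r : ℝ), 0 ≤ r → ∀ ⦃a⦄, a ∈ P → r • a ∈ P
  pointed : ∀ a, a ∈ P → -a ∈ P → a = 0
  isClosed : IsClosed P
  int_nonempty : (interior P).Nonempty

/-- `a ≤ b` with respect to the cone `P`. -/
def ConeLe (P : Set E) (a b : E) : Prop := b - a ∈ P

/-- `a ≪ b` with respect to the cone `P`. -/
def ConeLt (P : Set E) (a b : E) : Prop := b - a ∈ interior P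

/-- `p : X × X → E` is a TVS-cone metric over the cone `P`. -/
structure IsConeMetric (P : Set E) {X : Type*} (p : X → X → E) : Prop where
  nonneg : ∀ x y, ConeLe P 0 (p x y)
  eq_zero_iff : ∀ x y, p x y = 0 ↔ x = y
  symm : ∀ x y, p x y = p y x
  triangle : ∀ x y z, ConeLe P (p x y) (p x z + p z y)

/-- The sequence `x` cone-converges to `a`. -/
def ConeConverges (P : Set E) {X : Type*} (p : X → X → E) (x : ℕ → X) (a : X) : Prop :=
  ∀ c, c ∈ interior P → ∃ N, ∀ n ≥ N, ConeLt P (p (x n) a) c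

/-- The sequence `x` is cone-Cauchy. -/
def ConeCauchy (P : Set E) {X : Type*} (p : X → X → E) (x : ℕ → X) : Prop :=
  ∀ c, c ∈ interior P → ∃ N, ∀ n ≥ N, ∀ m ≥ N, ConeLt P (p (x n) (x m)) c

/-- `(X, p)` is cone-complete. -/
def ConeComplete (P : Set E) {X : Type*} (p : X → X → E) : Prop :=
  ∀ x : ℕ → X, ConeCauchy P p x → ∃ a, ConeConverges P p x a

/-- The nonlinear scalarization ξ_e(y) = inf {t : t • e - y ∈ P}. -/
noncomputable def xiScal (P : Set E) (e y : E) : ℝ := sInf {t : ℝ | t • e - y ∈ P}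

/-- The open ball `B(x, c) = {y : p x y ≪ c}`. -/
def coneBall (P : Set E) {X : Type*} (p : X → X → E) (x : X) (c : E) : Set X :=
  {y | ConeLt P (p x y) c}

/-- The cone metric topology `τ_p`, generated by the balls `B(x,c)`, `c ≫ 0`. -/
def coneTopology (P : Set E) {X : Type*} (p : X → X → E) : TopologicalSpace X :=
  TopologicalSpace.generateFrom {s | ∃ x c, c ∈ interior P ∧ s = coneBall P p x c}

end Defs

/-! The scalarization `ξ_e` is positive definite, monotone and subadditive on `P`, so composing it
with the cone metric gives a metric. Everything rests on two facts about the set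
`{t | t • e - y ∈ P}`: it is nonempty because `e` is an interior point, hence absorbs every
direction `y`, and it is closed, so for `y ∈ P` its infimum `ξ_e y` is attained, i.e.
`y ≤ ξ_e(y) • e`. The degenerate choice `e = 0` is possible only when `E` is trivial. -/

section Scalarization

variable {E : Type*} [AddCommGroup E] [Module ℝ E]

-- For `e = 0` the set `{t | -y ∈ P}` is `∅` or `univ`, and `sInf` of either is `0` in `ℝ`.
theorem xiScal_zero_left (P : Set E) (y : E) : xiScal P 0 y = 0 := by
  by_cases h : -y ∈ P <;> simp [xiScal, h]

variable [TopologicalSpace E] {P : Set E} {e a b : E}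

theorem exists_pos_sub_smul_mem_of_mem_interior [IsTopologicalAddGroup E] [ContinuousSMul ℝ E]
    (he : e ∈ interior P) (y : E) : ∃ s : ℝ, 0 < s ∧ e - s • y ∈ P := by
  have hcont : ContinuousAt (fun s : ℝ => e - s • y) 0 := by fun_prop
  have hnhds : ∀ᶠ s : ℝ in 𝓝 0, e - s • y ∈ P :=
    hcont.eventually_mem (mem_interior_iff_mem_nhds.1 (by simpa using he))
  obtain ⟨s, hs, hpos⟩ :=
    ((hnhds.filter_mono nhdsWithin_le_nhds).and (self_mem_nhdsWithin (s := Set.Ioi 0))).exists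
  exact ⟨s, hpos, hs⟩

namespace IsTVSCone

variable (hP : IsTVSCone P)
include hP

theorem smul_mem_iff {r : ℝ} (hr : 0 < r) : r • a ∈ P ↔ a ∈ P := by
  refine ⟨fun h => ?_, fun h => hP.smul_mem r hr.le h⟩
  simpa [smul_smul, inv_mul_cancel₀ hr.ne'] using hP.smul_mem r⁻¹ (inv_pos.2 hr).le h

theorem nonneg_of_smul_sub_mem (he0 : e ≠ 0) (heP : e ∈ P) (hb : b ∈ P) {t : ℝ}
    (ht : t • e - b ∈ P) : 0 ≤ t := by
  by_contra! htneg
  have hpos : t • e ∈ P := by simpa using hP.add_mem ht hb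
  have hneg : -(t • e) ∈ P := by simpa using hP.smul_mem (-t) (by linarith) heP
  exact (smul_ne_zero htneg.ne he0) (hP.pointed _ hpos hneg)

theorem xiScal_le (he0 : e ≠ 0) (heP : e ∈ P) (hb : b ∈ P) {t : ℝ} (ht : t • e - b ∈ P) :
    xiScal P e b ≤ t :=
  csInf_le ⟨0, fun _ hs => hP.nonneg_of_smul_sub_mem he0 heP hb hs⟩ ht

variable [IsTopologicalAddGroup E] [ContinuousSMul ℝ E]

theorem eq_zero_of_zero_mem_interior (h0 : (0 : E) ∈ interior P) (y : E) : y = 0 := by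
  have hmem : ∀ z : E, z ∈ P := fun z => by
    obtain ⟨s, hs, hz⟩ := exists_pos_sub_smul_mem_of_mem_interior h0 (-z)
    simpa [hP.smul_mem_iff hs] using hz
  exact hP.pointed y (hmem y) (hmem (-y))

theorem xiScal_set_nonempty (he : e ∈ interior P) (y : E) : {t : ℝ | t • e - y ∈ P}.Nonempty := by
  obtain ⟨s, hs, hy⟩ := exists_pos_sub_smul_mem_of_mem_interior he y
  refine ⟨s⁻¹, ?_⟩
  simpa [smul_sub, smul_smul, inv_mul_cancel₀ hs.ne'] using hP.smul_mem s⁻¹ (inv_pos.2 hs).le hy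

theorem xiScal_smul_sub_mem (he : e ∈ interior P) (he0 : e ≠ 0) (hb : b ∈ P) :
    xiScal P e b • e - b ∈ P := by
  have hclosed : IsClosed {t : ℝ | t • e - b ∈ P} :=
    hP.isClosed.preimage (by fun_prop)
  exact hclosed.csInf_mem (hP.xiScal_set_nonempty he b)
    ⟨0, fun _ hs => hP.nonneg_of_smul_sub_mem he0 (interior_subset he) hb hs⟩

theorem xiScal_nonneg (he : e ∈ interior P) (hb : b ∈ P) : 0 ≤ xiScal P e b := by
  rcases eq_or_ne e 0 with rfl | he0
  · rw [xiScal_zero_left]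
  exact le_csInf (hP.xiScal_set_nonempty he b) fun _ hs =>
    hP.nonneg_of_smul_sub_mem he0 (interior_subset he) hb hs

theorem xiScal_eq_zero_iff (he : e ∈ interior P) (hb : b ∈ P) : xiScal P e b = 0 ↔ b = 0 := by
  rcases eq_or_ne e 0 with rfl | he0
  · simp [xiScal_zero_left, hP.eq_zero_of_zero_mem_interior he b]
  refine ⟨fun h => hP.pointed b hb ?_, fun h => ?_⟩
  · simpa [h] using hP.xiScal_smul_sub_mem he he0 hb
  · refine le_antisymm (hP.xiScal_le he0 (interior_subset he) hb ?_) (hP.xiScal_nonneg he hb)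
    simpa [h] using hP.smul_mem 0 le_rfl (interior_subset he)

theorem xiScal_mono (he : e ∈ interior P) (ha : a ∈ P) (hab : b - a ∈ P) :
    xiScal P e a ≤ xiScal P e b := by
  rcases eq_or_ne e 0 with rfl | he0
  · simp [xiScal_zero_left]
  have hb : b ∈ P := by simpa using hP.add_mem ha hab
  refine hP.xiScal_le he0 (interior_subset he) ha ?_
  -- `a ≤ b ≤ ξ_e(b) • e`
  simpa using hP.add_mem (hP.xiScal_smul_sub_mem he he0 hb) hab

theorem xiScal_add_le (he : e ∈ interior P) (ha : a ∈ P) (hb : b ∈ P) :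
    xiScal P e (a + b) ≤ xiScal P e a + xiScal P e b := by
  rcases eq_or_ne e 0 with rfl | he0
  · simp [xiScal_zero_left]
  refine hP.xiScal_le he0 (interior_subset he) (hP.add_mem ha hb) ?_
  have hsum := hP.add_mem (hP.xiScal_smul_sub_mem he he0 ha) (hP.xiScal_smul_sub_mem he he0 hb)
  convert hsum using 1
  rw [add_smul]
  abel

end IsTVSCone

end Scalarization

theorem stmt_0_general {E X : Type*} [AddCommGroup E] [Module ℝ E] [TopologicalSpace E]
    [IsTopologicalAddGroup E] [ContinuousSMul ℝ E]
    (P : Set E) (hP : IsTVSCone P) (p : X → X → E) (hp : IsConeMetric P p)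
    (e : E) (he : e ∈ interior P) :
    (∀ x y : X, 0 ≤ xiScal P e (p x y)) ∧
    (∀ x y : X, xiScal P e (p x y) = 0 ↔ x = y) ∧
    (∀ x y : X, xiScal P e (p x y) = xiScal P e (p y x)) ∧
    (∀ x y z : X, xiScal P e (p x y) ≤ xiScal P e (p x z) + xiScal P e (p z y)) := by
  have hpP : ∀ x y, p x y ∈ P := fun x y => by simpa [ConeLe] using hp.nonneg x y
  refine ⟨fun x y => hP.xiScal_nonneg he (hpP x y), fun x y => ?_, fun x y => by rw [hp.symm],
    fun x y z => ?_⟩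
  · rw [hP.xiScal_eq_zero_iff he (hpP x y), hp.eq_zero_iff]
  · calc xiScal P e (p x y) ≤ xiScal P e (p x z + p z y) :=
          hP.xiScal_mono he (hpP x y) (hp.triangle x y z)
      _ ≤ xiScal P e (p x z) + xiScal P e (p z y) :=
          hP.xiScal_add_le he (hpP x z) (hpP z y)

/-- `d_p = ξ_e ∘ p` is a metric on `X`. -/
theorem stmt_0 {E X : Type*} [AddCommGroup E] [Module ℝ E] [TopologicalSpace E]
    [IsTopologicalAddGroup E] [ContinuousSMul ℝ E] [T2Space E] [Nonempty X]
    (P : Set E) (hP : IsTVSCone P) (p : X → X → E) (hp : IsConeMetric P p)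
    (e : E) (he : e ∈ interior P) :
    (∀ x y : X, 0 ≤ xiScal P e (p x y)) ∧
    (∀ x y : X, xiScal P e (p x y) = 0 ↔ x = y) ∧
    (∀ x y : X, xiScal P e (p x y) = xiScal P e (p y x)) ∧
    (∀ x y z : X, xiScal P e (p x y) ≤ xiScal P e (p x z) + xiScal P e (p z y)) :=
  stmt_0_general P hP p hp e he
end

section
/- Let (X,p) be a TVS-cone metric space over a locally convex space E whose topology is generated by a family S of monotone seminorms (so the cone P is normal). For every sequence (x_n) in X and every x ∈ X: (x_n) cone-converges to x if and only if p(x_n, x) → 0 in the topology of E. -/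
open Filter Topology

/-! By normality, `0 ≤ p (x n) a ≪ c` gives `q (p (x n) a) ≤ q c` for every seminorm `q` of the
family, and points `c ≫ 0` with `q c` arbitrarily small lie on the ray through any interior point
of the cone. Conversely, `{y | y ≪ c}` is an open neighbourhood of `0`. -/

section ConeConvergence

open scoped Pointwise

variable {E X : Type*} [AddCommGroup E] [TopologicalSpace E] {P : Set E}

theorem ConeConverges.of_tendsto [ContinuousSub E] {p : X → X → E} {x : ℕ → X} {a : X}
    (h : Tendsto (fun n => p (x n) a) atTop (𝓝 0)) : ConeConverges P p x a := by
  intro c hc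
  have hnhds : {y : E | ConeLt P y c} ∈ 𝓝 0 :=
    (isOpen_interior.preimage (continuous_const.sub continuous_id)).mem_nhds (by simpa [ConeLt])
  exact eventually_atTop.1 (h hnhds)

variable [Module ℝ E]

theorem IsTVSCone.smul_mem_interior [ContinuousConstSMul ℝ E] (hP : IsTVSCone P) {r : ℝ}
    (hr : 0 < r) {e : E} (he : e ∈ interior P) : r • e ∈ interior P := by
  have hrP : r • P ⊆ P := by
    rintro _ ⟨y, hy, rfl⟩
    exact hP.smul_mem r hr.le hy
  apply interior_mono hrP
  rw [interior_smul₀ hr.ne']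
  exact Set.smul_mem_smul_set he

theorem IsTVSCone.exists_mem_interior_seminorm_lt [ContinuousConstSMul ℝ E] (hP : IsTVSCone P)
    (q : Seminorm ℝ E) {ε : ℝ} (hε : 0 < ε) : ∃ c ∈ interior P, q c < ε := by
  obtain ⟨e, he⟩ := hP.int_nonempty
  have hqe : 0 ≤ q e := apply_nonneg q e
  set r := ε / (q e + 1)
  have hr : 0 < r := by positivity
  refine ⟨r • e, hP.smul_mem_interior hr he, ?_⟩
  calc q (r • e) = r * q e := by rw [map_smul_eq_mul, Real.norm_of_nonneg hr.le]
    _ < r * (q e + 1) := by gcongr; linarith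
    _ = ε := div_mul_cancel₀ ε (by positivity)

theorem ConeConverges.tendsto_of_withSeminorms [ContinuousConstSMul ℝ E] {ι : Type*}
    {S : ι → Seminorm ℝ E} (hS : WithSeminorms S) (hP : IsTVSCone P)
    (hmono : ∀ i : ι, ∀ a b : E, a ∈ P → ConeLe P a b → S i a ≤ S i b)
    {p : X → X → E} (hp : IsConeMetric P p) {x : ℕ → X} {a : X}
    (h : ConeConverges P p x a) : Tendsto (fun n => p (x n) a) atTop (𝓝 0) := by
  rw [hS.tendsto_nhds]
  intro i ε hε
  obtain ⟨c, hc, hcε⟩ := hP.exists_mem_interior_seminorm_lt (S i) hε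
  obtain ⟨N, hN⟩ := h c hc
  filter_upwards [eventually_ge_atTop N] with n hn
  have hpos : p (x n) a ∈ P := by simpa [ConeLe] using hp.nonneg (x n) a
  calc S i (p (x n) a - 0) = S i (p (x n) a) := by rw [sub_zero]
    _ ≤ S i c := hmono i _ _ hpos (interior_subset (hN n hn))
    _ < ε := hcε

end ConeConvergence

theorem stmt_1_general {E X : Type*} [AddCommGroup E] [Module ℝ E] [TopologicalSpace E]
    [IsTopologicalAddGroup E] [ContinuousSMul ℝ E]
    {ι : Type*} (S : ι → Seminorm ℝ E) (hS : WithSeminorms S)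
    (P : Set E) (hP : IsTVSCone P)
    (hmono : ∀ i : ι, ∀ a b : E, a ∈ P → ConeLe P a b → S i a ≤ S i b)
    (p : X → X → E) (hp : IsConeMetric P p) (x : ℕ → X) (a : X) :
    ConeConverges P p x a ↔ Tendsto (fun n => p (x n) a) atTop (nhds 0) :=
  ⟨fun h => h.tendsto_of_withSeminorms hS hP hmono hp, ConeConverges.of_tendsto⟩

/-- over a normal cone in a locally convex space, cone convergence of `x_n`
to `x` is equivalent to `p (x_n) x → 0` in `E`. -/
theorem stmt_1 {E X : Type*} [AddCommGroup E] [Module ℝ E] [TopologicalSpace E]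
    [IsTopologicalAddGroup E] [ContinuousSMul ℝ E] [T2Space E] [Nonempty X]
    {ι : Type*} [Nonempty ι] (S : ι → Seminorm ℝ E) (hS : WithSeminorms S)
    (P : Set E) (hP : IsTVSCone P)
    (hmono : ∀ i : ι, ∀ a b : E, a ∈ P → ConeLe P a b → S i a ≤ S i b)
    (p : X → X → E) (hp : IsConeMetric P p) (x : ℕ → X) (a : X) :
    ConeConverges P p x a ↔ Tendsto (fun n => p (x n) a) atTop (nhds 0) :=
  stmt_1_general S hS P hP hmono p hp x a
end

section
/- Let (X,p) be a TVS-cone metric space over a locally convex space E whose topology is generated by a family S of monotone seminorms (so the cone P is normal). If (x_n) cone-converges to x and (y_n) cone-converges to y, then p(x_n, y_n) → p(x, y) in the topology of E. -/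
open Filter Topology

/-! With `d n = p (x n) a + p (y n) b`, the triangle inequality gives
`-d n ≤ p (x n) (y n) - p a b ≤ d n`, so normality bounds every seminorm `q` of the difference by
`3 q (d n)`. Finally `q (p (x n) a) → 0`: for `e ≫ 0` and `t > 0`, eventually
`p (x n) a ≪ t • e`, hence `q (p (x n) a) ≤ t q e`. -/

open scoped Pointwise

section ConeLemmas

variable {E : Type*} [AddCommGroup E] {P : Set E}

theorem ConeLe.add_left {a b : E} (h : ConeLe P a b) (c : E) : ConeLe P (c + a) (c + b) := by
  simpa only [ConeLe, add_sub_add_left_eq_sub] using h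

theorem IsConeMetric.mem_cone {X : Type*} {p : X → X → E} (hp : IsConeMetric P p) (x y : X) :
    p x y ∈ P := by
  simpa only [ConeLe, sub_zero] using hp.nonneg x y

variable [Module ℝ E]

def ConeMonotone (P : Set E) (q : Seminorm ℝ E) : Prop :=
  ∀ a b, a ∈ P → ConeLe P a b → q a ≤ q b

theorem ConeMonotone.seminorm_sub_le {q : Seminorm ℝ E} (hq : ConeMonotone P q)
    {u v d : E} (huv : ConeLe P u (d + v)) (hvu : ConeLe P v (d + u)) :
    q (u - v) ≤ 3 * q d := by
  have hw : u - v + d ∈ P := by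
    simpa only [ConeLe, show d + u - v = u - v + d by abel] using hvu
  have hw_le : ConeLe P (u - v + d) ((2 : ℝ) • d) := by
    simpa only [ConeLe, show (2 : ℝ) • d - (u - v + d) = d + v - u by rw [two_smul]; abel]
      using huv
  calc q (u - v) = q (u - v + d - d) := by rw [add_sub_cancel_right]
    _ ≤ q (u - v + d) + q d := map_sub_le_add q _ _
    _ ≤ q ((2 : ℝ) • d) + q d := by gcongr; exact hq _ _ hw hw_le
    _ = 3 * q d := by rw [map_smul_eq_mul, Real.norm_two]; ring

variable [TopologicalSpace E]

namespace IsTVSCone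

theorem coneLe_trans (hP : IsTVSCone P) {a b c : E} (hab : ConeLe P a b) (hbc : ConeLe P b c) :
    ConeLe P a c := by
  simpa only [ConeLe, sub_add_sub_cancel] using hP.add_mem hbc hab

theorem smul_mem_interior_s3 [ContinuousConstSMul ℝ E] (hP : IsTVSCone P) {t : ℝ} (ht : 0 < t)
    {e : E} (he : e ∈ interior P) : t • e ∈ interior P := by
  have hsub : t • P ⊆ P := Set.smul_set_subset_iff.2 fun _ ha => hP.smul_mem t ht.le ha
  apply interior_mono hsub
  rw [interior_smul₀ ht.ne']
  exact Set.smul_mem_smul_set he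

theorem tendsto_seminorm_zero [ContinuousConstSMul ℝ E] (hP : IsTVSCone P)
    {q : Seminorm ℝ E} (hq : ConeMonotone P q) {α : Type*} {l : Filter α} {u : α → E}
    (hu : ∀ i, u i ∈ P) (hsmall : ∀ c ∈ interior P, ∀ᶠ i in l, ConeLe P (u i) c) :
    Tendsto (fun i => q (u i)) l (𝓝 0) := by
  obtain ⟨e, he⟩ := hP.int_nonempty
  refine tendsto_order.2 ⟨fun r hr => .of_forall fun i => hr.trans_le (apply_nonneg q _),
    fun ε hε => ?_⟩
  set t := ε / (q e + 1)
  have hqe : 0 < q e + 1 := by positivity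
  have ht : 0 < t := div_pos hε hqe
  filter_upwards [hsmall _ (hP.smul_mem_interior_s3 ht he)] with i hi
  calc q (u i) ≤ q (t • e) := hq _ _ (hu i) hi
    _ = t * q e := by rw [map_smul_eq_mul, Real.norm_of_nonneg ht.le]
    _ < t * (q e + 1) := by gcongr; exact lt_add_one _
    _ = ε := div_mul_cancel₀ _ hqe.ne'

end IsTVSCone

namespace IsConeMetric

variable {X : Type*} {p : X → X → E}

theorem coneLe_add_add (hP : IsTVSCone P) (hp : IsConeMetric P p) (x y a b : X) :
    ConeLe P (p x y) (p x a + p y b + p a b) := by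
  have h := hP.coneLe_trans (hp.triangle x y a) ((hp.triangle a y b).add_left (p x a))
  rwa [hp.symm b y, ← add_assoc, add_right_comm] at h

end IsConeMetric

theorem ConeConverges.tendsto_seminorm [ContinuousConstSMul ℝ E] (hP : IsTVSCone P)
    {X : Type*} {p : X → X → E} (hp : IsConeMetric P p) {q : Seminorm ℝ E}
    (hq : ConeMonotone P q) {x : ℕ → X} {a : X} (hx : ConeConverges P p x a) :
    Tendsto (fun n => q (p (x n) a)) atTop (𝓝 0) :=
  hP.tendsto_seminorm_zero hq (fun n => hp.mem_cone (x n) a) fun c hc =>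
    eventually_atTop.2 <| (hx c hc).imp fun _ hN n hn => interior_subset (hN n hn)

end ConeLemmas

theorem stmt_3_general {E X : Type*} [AddCommGroup E] [Module ℝ E] [TopologicalSpace E]
    [ContinuousSMul ℝ E]
    {ι : Type*} (S : ι → Seminorm ℝ E) (hS : WithSeminorms S)
    (P : Set E) (hP : IsTVSCone P)
    (hmono : ∀ i : ι, ∀ a b : E, a ∈ P → ConeLe P a b → S i a ≤ S i b)
    (p : X → X → E) (hp : IsConeMetric P p)
    (x y : ℕ → X) (a b : X)
    (hx : ConeConverges P p x a) (hy : ConeConverges P p y b) :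
    Tendsto (fun n => p (x n) (y n)) atTop (nhds (p a b)) := by
  rw [hS.tendsto_nhds]
  intro i ε hε
  have hd : Tendsto (fun n => 3 * (S i (p (x n) a) + S i (p (y n) b))) atTop (𝓝 0) := by
    have h := ((hx.tendsto_seminorm hP hp (hmono i)).add
      (hy.tendsto_seminorm hP hp (hmono i))).const_mul 3
    rwa [add_zero, mul_zero] at h
  filter_upwards [hd.eventually (gt_mem_nhds hε)] with n hn
  have hba : ConeLe P (p a b) (p (x n) a + p (y n) b + p (x n) (y n)) := by
    have h := hp.coneLe_add_add hP a b (x n) (y n)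
    rwa [hp.symm a (x n), hp.symm b (y n)] at h
  calc S i (p (x n) (y n) - p a b)
      ≤ 3 * S i (p (x n) a + p (y n) b) :=
        ConeMonotone.seminorm_sub_le (hmono i) (hp.coneLe_add_add hP _ _ a b) hba
    _ ≤ 3 * (S i (p (x n) a) + S i (p (y n) b)) := by gcongr; exact map_add_le_add _ _ _
    _ < ε := hn

/-- over a normal cone in a locally convex space, if `x_n → x` and `y_n → y`
(cone convergence), then `p (x_n) (y_n) → p x y` in `E`. -/
theorem stmt_3 {E X : Type*} [AddCommGroup E] [Module ℝ E] [TopologicalSpace E]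
    [IsTopologicalAddGroup E] [ContinuousSMul ℝ E] [T2Space E] [Nonempty X]
    {ι : Type*} [Nonempty ι] (S : ι → Seminorm ℝ E) (hS : WithSeminorms S)
    (P : Set E) (hP : IsTVSCone P)
    (hmono : ∀ i : ι, ∀ a b : E, a ∈ P → ConeLe P a b → S i a ≤ S i b)
    (p : X → X → E) (hp : IsConeMetric P p)
    (x y : ℕ → X) (a b : X)
    (hx : ConeConverges P p x a) (hy : ConeConverges P p y b) :
    Tendsto (fun n => p (x n) (y n)) atTop (nhds (p a b)) :=
  stmt_3_general S hS P hP hmono p hp x y a b hx hy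
end

section
/- Let (X,p) be a TVS-cone metric space over E with cone P and fix e ∈ int P. For every sequence (x_n) in X: (x_n) is cone-Cauchy if and only if (x_n) is Cauchy for d_p, i.e., for every ε > 0 there is N such that d_p(x_n, x_m) = ξ_e(p(x_n, x_m)) < ε for all n, m ≥ N. -/
open Filter Topology

/-!
The scalarization compares with the cone order through the interior of `P`: `y ≪ t • e`
forces `ξ_e(y) < t`, and conversely `ξ_e(y) < δ` gives `y ≪ c` as soon as `δ • e ≪ c`.
Since `ε • e ≫ 0` for `ε > 0`, and every `c ≫ 0` dominates some `δ • e` with `δ > 0`,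
the two Cauchy conditions translate into each other term by term.
-/

open scoped Pointwise

namespace IsTVSCone

variable {E : Type*} [AddCommGroup E] [Module ℝ E] [TopologicalSpace E] {P : Set E}

theorem smul_mem_interior_s6 [ContinuousConstSMul ℝ E] (hP : IsTVSCone P) {r : ℝ} (hr : 0 < r)
    {a : E} (ha : a ∈ interior P) : r • a ∈ interior P := by
  have hrP : r • P ⊆ P := Set.smul_set_subset_iff.2 fun _ hb => hP.smul_mem r hr.le hb
  rw [← Set.smul_mem_smul_set_iff₀ hr.ne', ← interior_smul₀ hr.ne'] at ha
  exact interior_mono hrP ha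

theorem add_mem_interior [IsTopologicalAddGroup E] (hP : IsTVSCone P) {a b : E}
    (ha : a ∈ interior P) (hb : b ∈ P) : a + b ∈ interior P := by
  have hPP : P + P ⊆ P := Set.add_subset_iff.2 fun _ ha _ hb => hP.add_mem ha hb
  exact interior_mono hPP (subset_interior_add_left (Set.add_mem_add ha hb))

end IsTVSCone

section Scalarization

variable {E : Type*} [AddCommGroup E] [Module ℝ E] [TopologicalSpace E]
  [IsTopologicalAddGroup E] [ContinuousSMul ℝ E] {P : Set E}

theorem exists_pos_sub_smul_mem_interior {z : E} (hz : z ∈ interior P) (e : E) :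
    ∃ δ > (0 : ℝ), z - δ • e ∈ interior P := by
  have hcont : Continuous fun t : ℝ => z - t • e := by fun_prop
  have hnhds : ∀ᶠ t in 𝓝 (0 : ℝ), z - t • e ∈ interior P :=
    hcont.continuousAt.eventually_mem (by simpa using isOpen_interior.mem_nhds hz)
  obtain ⟨δ, hδ, hδpos⟩ := ((hnhds.filter_mono nhdsWithin_le_nhds).and
    (self_mem_nhdsWithin : Set.Ioi (0 : ℝ) ∈ 𝓝[>] 0)).exists
  exact ⟨δ, hδpos, hδ⟩

theorem IsTVSCone.exists_smul_sub_mem (hP : IsTVSCone P) {e : E} (he : e ∈ interior P) (y : E) :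
    ∃ t : ℝ, t • e - y ∈ P := by
  obtain ⟨s, hs, hmem⟩ := exists_pos_sub_smul_mem_interior he y
  refine ⟨s⁻¹, ?_⟩
  have h := hP.smul_mem s⁻¹ (inv_nonneg.2 hs.le) (interior_subset hmem)
  rwa [smul_sub, smul_smul, inv_mul_cancel₀ hs.ne', one_smul] at h

-- `0 < t` is needed when the set is not bounded below, where `sInf` takes the junk value `0`.
theorem xiScal_lt_of_smul_sub_mem_interior {e y : E} {t : ℝ} (ht : 0 < t)
    (h : t • e - y ∈ interior P) : xiScal P e y < t := by
  obtain ⟨δ, hδ, hmem⟩ := exists_pos_sub_smul_mem_interior h e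
  have hmem' : (t - δ) • e - y ∈ P := by
    have heq : (t - δ) • e - y = t • e - y - δ • e := by rw [sub_smul]; abel
    exact heq ▸ interior_subset hmem
  by_cases hbdd : BddBelow {s : ℝ | s • e - y ∈ P}
  · exact (csInf_le hbdd hmem').trans_lt (sub_lt_self t hδ)
  · rwa [xiScal, Real.sInf_of_not_bddBelow hbdd]

theorem IsTVSCone.exists_lt_smul_sub_mem_of_xiScal_lt (hP : IsTVSCone P) {e : E}
    (he : e ∈ interior P) {y : E} {t : ℝ} (h : xiScal P e y < t) :
    ∃ s < t, s • e - y ∈ P := by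
  by_cases hbdd : BddBelow {s : ℝ | s • e - y ∈ P}
  · obtain ⟨s, hs, hst⟩ := (csInf_lt_iff hbdd (hP.exists_smul_sub_mem he y)).1 h
    exact ⟨s, hst, hs⟩
  · obtain ⟨s, hs, hst⟩ := not_bddBelow_iff.1 hbdd t
    exact ⟨s, hst, hs⟩

theorem IsTVSCone.coneLt_of_xiScal_lt (hP : IsTVSCone P) {e : E} (he : e ∈ interior P)
    {c y : E} {δ : ℝ} (hc : c - δ • e ∈ interior P) (h : xiScal P e y < δ) :
    ConeLt P y c := by
  obtain ⟨s, hsδ, hs⟩ := hP.exists_lt_smul_sub_mem_of_xiScal_lt he h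
  have hgap : (δ - s) • e ∈ P := hP.smul_mem _ (sub_nonneg.2 hsδ.le) (interior_subset he)
  have hsum := hP.add_mem_interior hc (hP.add_mem hgap hs)
  have heq : c - δ • e + ((δ - s) • e + (s • e - y)) = c - y := by rw [sub_smul]; abel
  rwa [heq] at hsum

end Scalarization

theorem stmt_6_general {E X : Type*} [AddCommGroup E] [Module ℝ E] [TopologicalSpace E]
    [IsTopologicalAddGroup E] [ContinuousSMul ℝ E]
    (P : Set E) (hP : IsTVSCone P) (p : X → X → E)
    (e : E) (he : e ∈ interior P) (x : ℕ → X) :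
    ConeCauchy P p x ↔
      ∀ ε : ℝ, 0 < ε → ∃ N, ∀ n ≥ N, ∀ m ≥ N, xiScal P e (p (x n) (x m)) < ε := by
  constructor
  · intro hx ε hε
    obtain ⟨N, hN⟩ := hx (ε • e) (hP.smul_mem_interior_s6 hε he)
    exact ⟨N, fun n hn m hm => xiScal_lt_of_smul_sub_mem_interior hε (hN n hn m hm)⟩
  · intro hx c hc
    obtain ⟨δ, hδ, hcδ⟩ := exists_pos_sub_smul_mem_interior hc e
    obtain ⟨N, hN⟩ := hx δ hδ
    exact ⟨N, fun n hn m hm => hP.coneLt_of_xiScal_lt he hcδ (hN n hn m hm)⟩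

/-- `x_n` is cone-Cauchy iff it is Cauchy for `d_p = ξ_e ∘ p`. -/
theorem stmt_6 {E X : Type*} [AddCommGroup E] [Module ℝ E] [TopologicalSpace E]
    [IsTopologicalAddGroup E] [ContinuousSMul ℝ E] [T2Space E] [Nonempty X]
    (P : Set E) (hP : IsTVSCone P) (p : X → X → E) (hp : IsConeMetric P p)
    (e : E) (he : e ∈ interior P) (x : ℕ → X) :
    ConeCauchy P p x ↔
      ∀ ε : ℝ, 0 < ε → ∃ N, ∀ n ≥ N, ∀ m ≥ N, xiScal P e (p (x n) (x m)) < ε :=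
  stmt_6_general P hP p e he x
end

section
/- Let (X,p) be a TVS-cone metric space over a metrizable locally convex space E whose topology is generated by a countable family (q_k)_{k≥1} of seminorms. Define h : E → ℝ by h(u) = Σ_{k=1}^∞ 2^{−k}·q_k(u)/(1 + q_k(u)) and d_S : X × X → ℝ by d_S(x,y) = inf{h(u) : u ∈ P and p(x,y) ≤ u}. Then d_S is a metric on X: for all x, y, z ∈ X, 0 ≤ d_S(x,y) < ∞; d_S(x,y) = 0 if and only if x = y; d_S(x,y) = d_S(y,x); and d_S(x,y) ≤ d_S(x,z) + d_S(z,y). -/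
open Filter Topology

/-- `h(u) = Σ_{k=1}^∞ 2^{-k} q_k(u)/(1 + q_k(u))` (indexed by `k : ℕ`, weight `2^{-(k+1)}`). -/
noncomputable def hFun {E : Type*} [AddCommGroup E] [Module ℝ E]
    (q : ℕ → Seminorm ℝ E) (u : E) : ℝ :=
  ∑' k : ℕ, (1 / 2 : ℝ) ^ (k + 1) * (q k u / (1 + q k u))

/-- `d_S(x,y) = inf {h(u) : u ∈ P, p x y ≤ u}`. -/
noncomputable def dS {E X : Type*} [AddCommGroup E] [Module ℝ E] [TopologicalSpace E]
    (q : ℕ → Seminorm ℝ E) (P : Set E) (p : X → X → E) (x y : X) : ℝ :=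
  sInf {r : ℝ | ∃ u ∈ P, ConeLe P (p x y) u ∧ r = hFun q u}

/-!
`h` is the usual F-norm of a countably normed space: subadditivity of `t ↦ t / (1 + t)` makes
it subadditive, so admissible bounds `u ≥ p x z` and `v ≥ p z y` add up to the admissible bound
`u + v ≥ p x y`, which gives the triangle inequality. If `d_S(x, y) = 0`, there are admissible
bounds `u n ≥ p x y` with `h (u n) → 0`; each summand of `h` controls one seminorm, so
`u n → 0`, and closedness of `P` turns `u n - p x y ∈ P` into `-p x y ∈ P`. As `P` is pointed,
`p x y = 0`.
-/

lemma strictMonoOn_div_one_add : StrictMonoOn (fun t : ℝ => t / (1 + t)) (Set.Ici 0) := by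
  intro a ha b hb hab
  simp only [Set.mem_Ici] at ha hb
  rw [div_lt_div_iff₀ (by linarith) (by linarith)]
  linarith

lemma div_one_add_le_one {t : ℝ} (ht : 0 ≤ t) : t / (1 + t) ≤ 1 :=
  (div_le_one (by linarith)).2 (by linarith)

lemma add_div_one_add_le {a b : ℝ} (ha : 0 ≤ a) (hb : 0 ≤ b) :
    (a + b) / (1 + (a + b)) ≤ a / (1 + a) + b / (1 + b) := by
  rw [add_div]
  gcongr <;> linarith

section hFun

variable {E : Type*} [AddCommGroup E] [Module ℝ E] (q : ℕ → Seminorm ℝ E)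

lemma hFun_term_nonneg (u : E) (k : ℕ) :
    0 ≤ (1 / 2 : ℝ) ^ (k + 1) * (q k u / (1 + q k u)) := by
  have := apply_nonneg (q k) u
  positivity

lemma summable_hFun (u : E) :
    Summable fun k : ℕ => (1 / 2 : ℝ) ^ (k + 1) * (q k u / (1 + q k u)) := by
  refine Summable.of_nonneg_of_le (hFun_term_nonneg q u) (fun k => ?_)
    (summable_geometric_two.comp_injective (add_left_injective 1))
  exact mul_le_of_le_one_right (by positivity) (div_one_add_le_one (apply_nonneg _ _))

lemma hFun_nonneg (u : E) : 0 ≤ hFun q u :=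
  tsum_nonneg (hFun_term_nonneg q u)

lemma le_hFun (u : E) (k : ℕ) : (1 / 2 : ℝ) ^ (k + 1) * (q k u / (1 + q k u)) ≤ hFun q u :=
  (summable_hFun q u).le_tsum k fun j _ => hFun_term_nonneg q u j

@[simp]
lemma hFun_zero : hFun q 0 = 0 := by
  simp [hFun]

lemma hFun_add_le (u v : E) : hFun q (u + v) ≤ hFun q u + hFun q v := by
  rw [hFun, hFun, hFun, ← (summable_hFun q u).tsum_add (summable_hFun q v)]
  refine (summable_hFun q _).tsum_le_tsum (fun k => ?_)
    ((summable_hFun q u).add (summable_hFun q v))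
  rw [← mul_add]
  gcongr
  have hu := apply_nonneg (q k) u
  have hv := apply_nonneg (q k) v
  calc q k (u + v) / (1 + q k (u + v)) ≤ (q k u + q k v) / (1 + (q k u + q k v)) :=
        strictMonoOn_div_one_add.monotoneOn (Set.mem_Ici.2 (apply_nonneg _ _))
          (Set.mem_Ici.2 (add_nonneg hu hv)) (map_add_le_add _ _ _)
    _ ≤ q k u / (1 + q k u) + q k v / (1 + q k v) := add_div_one_add_le hu hv

end hFun

lemma WithSeminorms.tendsto_of_tendsto_hFun {E ι : Type*} [AddCommGroup E] [Module ℝ E]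
    [TopologicalSpace E] {q : ℕ → Seminorm ℝ E} (hq : WithSeminorms q) {l : Filter ι}
    {u : ι → E} {y : E} (h : Tendsto (fun i => hFun q (u i - y)) l (𝓝 0)) :
    Tendsto u l (𝓝 y) := by
  rw [hq.tendsto_nhds]
  intro k ε hε
  have hterm : Tendsto (fun i => (1 / 2 : ℝ) ^ (k + 1) * (q k (u i - y) / (1 + q k (u i - y))))
      l (𝓝 0) :=
    squeeze_zero (fun i => hFun_term_nonneg q _ k) (fun i => le_hFun q _ k) h
  have hbound : 0 < (1 / 2 : ℝ) ^ (k + 1) * (ε / (1 + ε)) := by positivity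
  filter_upwards [hterm.eventually_lt_const hbound] with i hi
  exact (strictMonoOn_div_one_add.lt_iff_lt (Set.mem_Ici.2 (apply_nonneg _ _)) hε.le).1
    (lt_of_mul_lt_mul_left hi (by positivity))

lemma IsTVSCone.zero_mem {E : Type*} [AddCommGroup E] [Module ℝ E] [TopologicalSpace E]
    {P : Set E} (hP : IsTVSCone P) : (0 : E) ∈ P := by
  obtain ⟨a, ha⟩ := hP.int_nonempty
  simpa using hP.smul_mem 0 le_rfl (interior_subset ha)

lemma IsConeMetric.apply_mem {E X : Type*} [AddCommGroup E] {P : Set E} {p : X → X → E}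
    (hp : IsConeMetric P p) (x y : X) : p x y ∈ P := by
  simpa [ConeLe] using hp.nonneg x y

section dS

variable {E X : Type*} [AddCommGroup E] [Module ℝ E] [TopologicalSpace E]
  {q : ℕ → Seminorm ℝ E} {P : Set E} {p : X → X → E}

lemma dS_nonneg (x y : X) : 0 ≤ dS q P p x y :=
  Real.sInf_nonneg fun _ ⟨u, _, _, hr⟩ => hr ▸ hFun_nonneg q u

lemma dS_le_hFun {x y : X} {u : E} (hu : u ∈ P) (hle : ConeLe P (p x y) u) :
    dS q P p x y ≤ hFun q u :=
  csInf_le ⟨0, fun _ ⟨v, _, _, hr⟩ => hr ▸ hFun_nonneg q v⟩ ⟨u, hu, hle, rfl⟩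

lemma exists_hFun_lt_dS_add (hP : IsTVSCone P) (hp : IsConeMetric P p) (x y : X) {ε : ℝ}
    (hε : 0 < ε) : ∃ u ∈ P, ConeLe P (p x y) u ∧ hFun q u < dS q P p x y + ε := by
  have hne : {r : ℝ | ∃ u ∈ P, ConeLe P (p x y) u ∧ r = hFun q u}.Nonempty :=
    ⟨_, p x y, hp.apply_mem x y, by simpa [ConeLe] using hP.zero_mem, rfl⟩
  obtain ⟨_, ⟨u, hu, hle, rfl⟩, hlt⟩ := exists_lt_of_csInf_lt hne (lt_add_of_pos_right _ hε)
  exact ⟨u, hu, hle, hlt⟩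

lemma dS_comm (hp : IsConeMetric P p) (x y : X) : dS q P p x y = dS q P p y x := by
  rw [dS, dS, hp.symm]

lemma dS_self (hP : IsTVSCone P) (hp : IsConeMetric P p) (x : X) : dS q P p x x = 0 := by
  have hxx : ConeLe P (p x x) 0 := by
    simpa [ConeLe, (hp.eq_zero_iff x x).2 rfl] using hP.zero_mem
  exact le_antisymm (by simpa using dS_le_hFun (q := q) hP.zero_mem hxx) (dS_nonneg x x)

lemma dS_triangle (hP : IsTVSCone P) (hp : IsConeMetric P p) (x y z : X) :
    dS q P p x y ≤ dS q P p x z + dS q P p z y := by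
  refine le_of_forall_pos_lt_add fun ε hε => ?_
  obtain ⟨u, hu, hxz, hu_lt⟩ := exists_hFun_lt_dS_add (q := q) hP hp x z (half_pos hε)
  obtain ⟨v, hv, hzy, hv_lt⟩ := exists_hFun_lt_dS_add (q := q) hP hp z y (half_pos hε)
  have hxy : ConeLe P (p x y) (u + v) := by
    have hsplit :
        u + v - p x y = (u - p x z + (v - p z y)) + (p x z + p z y - p x y) := by
      abel
    rw [ConeLe, hsplit]
    exact hP.add_mem (hP.add_mem hxz hzy) (hp.triangle x y z)
  calc dS q P p x y ≤ hFun q (u + v) := dS_le_hFun (hP.add_mem hu hv) hxy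
    _ ≤ hFun q u + hFun q v := hFun_add_le q u v
    _ < dS q P p x z + dS q P p z y + ε := by linarith

lemma eq_of_dS_eq_zero (hq : WithSeminorms q) (hP : IsTVSCone P) (hp : IsConeMetric P p)
    {x y : X} (h : dS q P p x y = 0) : x = y := by
  have hε : ∀ n : ℕ, (0 : ℝ) < 1 / (n + 1) := fun n => Nat.one_div_pos_of_nat
  choose u hu hle hlt using fun n => exists_hFun_lt_dS_add (q := q) hP hp x y (hε n)
  simp only [h, zero_add] at hlt
  have hconv : Tendsto (fun n => u n - p x y) atTop (𝓝 (-p x y)) := by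
    refine hq.tendsto_of_tendsto_hFun (squeeze_zero (fun n => hFun_nonneg q _) (fun n => ?_)
      tendsto_one_div_add_atTop_nhds_zero_nat)
    simpa using (hlt n).le
  have hneg : -p x y ∈ P :=
    hP.isClosed.mem_of_tendsto hconv (Eventually.of_forall hle)
  exact (hp.eq_zero_iff x y).1 (hP.pointed _ (hp.apply_mem x y) hneg)

end dS

theorem stmt_12_general {E X : Type*} [AddCommGroup E] [Module ℝ E] [TopologicalSpace E]
    (q : ℕ → Seminorm ℝ E) (hq : WithSeminorms q)
    (P : Set E) (hP : IsTVSCone P) (p : X → X → E) (hp : IsConeMetric P p) :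
    (∀ x y : X, 0 ≤ dS q P p x y) ∧
    (∀ x y : X, dS q P p x y = 0 ↔ x = y) ∧
    (∀ x y : X, dS q P p x y = dS q P p y x) ∧
    (∀ x y z : X, dS q P p x y ≤ dS q P p x z + dS q P p z y) :=
  ⟨dS_nonneg, fun _ _ => ⟨eq_of_dS_eq_zero hq hP hp, fun h => h ▸ dS_self hP hp _⟩,
    dS_comm hp, dS_triangle hP hp⟩

/-- over a metrizable locally convex space whose topology is generated by
countably many seminorms, `d_S` is a metric on `X`. -/
theorem stmt_12 {E X : Type*} [AddCommGroup E] [Module ℝ E] [TopologicalSpace E]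
    [IsTopologicalAddGroup E] [ContinuousSMul ℝ E] [T2Space E] [Nonempty X]
    (q : ℕ → Seminorm ℝ E) (hq : WithSeminorms q)
    (P : Set E) (hP : IsTVSCone P) (p : X → X → E) (hp : IsConeMetric P p) :
    (∀ x y : X, 0 ≤ dS q P p x y) ∧
    (∀ x y : X, dS q P p x y = 0 ↔ x = y) ∧
    (∀ x y : X, dS q P p x y = dS q P p y x) ∧
    (∀ x y z : X, dS q P p x y ≤ dS q P p x z + dS q P p z y) :=
  stmt_12_general q hq P hP p hp
end

section
/- Let E be a real normed space, P ⊆ E a closed cone with nonempty interior, and (X,p) a TVS-cone metric space over E. Define d_S : X × X → ℝ by d_S(x,y) = inf{‖u‖ : u ∈ P and p(x,y) ≤ u}. Then for every sequence (x_n) in X and every x ∈ X: d_S(x_n, x) → 0 if and only if (x_n) cone-converges to x; that is, (X,p) and (X,d_S) have the same convergent sequences (they are topologically isomorphic). -/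
open Filter Topology
open Pointwise

/-- over a normed space `E`, with `d_S(x,y) = inf {‖u‖ : u ∈ P, p x y ≤ u}`,
`d_S (x_n) x → 0` iff `x_n` cone-converges to `x`. -/
theorem stmt_14 {E X : Type*} [NormedAddCommGroup E] [NormedSpace ℝ E] [Nonempty X]
    (P : Set E) (hP : IsTVSCone P) (p : X → X → E) (hp : IsConeMetric P p)
    (dS : X → X → ℝ)
    (hdS : ∀ x y : X, dS x y = sInf {r : ℝ | ∃ u ∈ P, ConeLe P (p x y) u ∧ r = ‖u‖})
    (x : ℕ → X) (a : X) :
    Tendsto (fun n => dS (x n) a) atTop (nhds 0) ↔ ConeConverges P p x a := by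
  obtain ⟨e, he⟩ := hP.int_nonempty
  have heP : e ∈ P := interior_subset he
  have h0P : (0 : E) ∈ P := by simpa using hP.smul_mem 0 le_rfl heP
  have add_int : ∀ u ∈ interior P, ∀ v ∈ P, u + v ∈ interior P := by
    intro u hu v hv
    have hsub : (fun w => w + v) '' interior P ⊆ P := by
      rintro _ ⟨w, hw, rfl⟩; exact hP.add_mem (interior_subset hw) hv
    have hopen : IsOpen ((fun w => w + v) '' interior P) :=
      (isOpenMap_add_right v) _ isOpen_interior
    exact interior_maximal hsub hopen ⟨u, hu, rfl⟩
  have smul_int : ∀ t : ℝ, 0 < t → ∀ u ∈ interior P, t • u ∈ interior P := by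
    intro t ht u hu
    have hsub : t • interior P ⊆ P := by
      rintro _ ⟨w, hw, rfl⟩; exact hP.smul_mem t ht.le (interior_subset hw)
    have hopen : IsOpen (t • interior P) := isOpen_interior.smul₀ ht.ne'
    exact interior_maximal hsub hopen ⟨u, hu, rfl⟩
  have hSne : ∀ n : ℕ, (‖p (x n) a‖) ∈ {r : ℝ | ∃ u ∈ P, ConeLe P (p (x n) a) u ∧ r = ‖u‖} := by
    intro n
    refine ⟨p (x n) a, ?_, ?_, rfl⟩
    · simpa [ConeLe] using hp.nonneg (x n) a
    · simp [ConeLe, h0P]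
  have hbdd : ∀ n : ℕ, ∀ r ∈ {r : ℝ | ∃ u ∈ P, ConeLe P (p (x n) a) u ∧ r = ‖u‖}, 0 ≤ r := by
    rintro n r ⟨u, _, _, rfl⟩; exact norm_nonneg u
  have hnn : ∀ n : ℕ, 0 ≤ dS (x n) a := by
    intro n
    rw [hdS]
    exact le_csInf ⟨_, hSne n⟩ (hbdd n)
  constructor
  · intro h c hc
    obtain ⟨ε, hε, hball⟩ := Metric.isOpen_iff.mp isOpen_interior c hc
    obtain ⟨N, hN⟩ := (Metric.tendsto_atTop.mp h) ε hε
    refine ⟨N, fun n hn => ?_⟩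
    have hlt : dS (x n) a < ε := by
      have := hN n hn
      rw [Real.dist_eq, sub_zero, abs_of_nonneg (hnn n)] at this
      exact this
    rw [hdS] at hlt
    obtain ⟨r, ⟨u, huP, hle, rfl⟩, hr⟩ := exists_lt_of_csInf_lt ⟨_, hSne n⟩ hlt
    have hcu : c - u ∈ interior P := by
      apply hball
      rw [Metric.mem_ball, dist_eq_norm]
      simpa using hr
    have : (c - u) + (u - p (x n) a) ∈ interior P := add_int _ hcu _ hle
    simpa [ConeLt, sub_add_sub_cancel] using this
  · intro h
    rw [Metric.tendsto_atTop]
    intro ε hε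
    set t : ℝ := min 1 (ε / (2 * (‖e‖ + 1))) with htdef
    have hd : 0 < 2 * (‖e‖ + 1) := by positivity
    have ht : 0 < t := lt_min one_pos (by positivity)
    have hc : t • e ∈ interior P := smul_int t ht e he
    obtain ⟨N, hN⟩ := h (t • e) hc
    refine ⟨N, fun n hn => ?_⟩
    have hub : dS (x n) a ≤ ‖t • e‖ := by
      rw [hdS]
      exact csInf_le ⟨0, hbdd n⟩
        ⟨t • e, interior_subset hc, interior_subset (hN n hn), rfl⟩
    have hnorm : ‖t • e‖ < ε := by
      rw [norm_smul, Real.norm_eq_abs, abs_of_pos ht]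
      have h1 : t ≤ ε / (2 * (‖e‖ + 1)) := min_le_right _ _
      have h2 : t * ‖e‖ ≤ t * (‖e‖ + 1) :=
        mul_le_mul_of_nonneg_left (by linarith) ht.le
      have h3 : t * (‖e‖ + 1) ≤ ε / 2 := by
        rw [div_mul_eq_div_div] at h1
        calc t * (‖e‖ + 1) ≤ (ε / 2 / (‖e‖ + 1)) * (‖e‖ + 1) := by
              apply mul_le_mul_of_nonneg_right h1 (by positivity)
          _ = ε / 2 := by field_simp
      linarith
    rw [Real.dist_eq, sub_zero, abs_of_nonneg (hnn n)]
    exact lt_of_le_of_lt hub hnorm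
end
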